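/- arXiv:1702.07239 — 9 statements merged into one kernel-verified Lean document; each statement's English description precedes it below -/
import Mathlib

section
/- Let C be a nonempty closed convex subset of a real Hilbert space H. Then the nearest point projection P_C is strongly nonexpansive: P_C is nonexpansive, and whenever (x_n) and (y_n) are sequences in H with (x_n - y_n) bounded and |x_n - y_n| - |P_C x_n - P_C y_n| → 0, it follows that (x_n - y_n) - (P_C x_n - P_C y_n) → 0 in norm. -/
open Filter Topology RealInnerProductSpace

/-- `P` is the nearest point projection of a real Hilbert space onto `C`. -/
def IsNearestPointProj {H : Type*} [NormedAddCommGroup H] [InnerProductSpace ℝ H]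
    (C : Set H) (P : H → H) : Prop :=
  ∀ x, P x ∈ C ∧ ∀ y ∈ C, ‖x - P x‖ ≤ ‖x - y‖

/-- The distance between two sets. -/
noncomputable def setDist {H : Type*} [NormedAddCommGroup H] (C₁ C₂ : Set H) : ℝ :=
  sInf {d : ℝ | ∃ a ∈ C₁, ∃ b ∈ C₂, d = ‖a - b‖}

theorem stmt2 {H : Type*} [NormedAddCommGroup H] [InnerProductSpace ℝ H] [CompleteSpace H]
    (C : Set H) (hC : C.Nonempty) (hCc : IsClosed C) (hCv : Convex ℝ C)
    (P : H → H) (hP : IsNearestPointProj C P) :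
    (∀ x y : H, ‖P x - P y‖ ≤ ‖x - y‖) ∧
      ∀ x y : ℕ → H, (∃ M : ℝ, ∀ n, ‖x n - y n‖ ≤ M) →
        Tendsto (fun n => ‖x n - y n‖ - ‖P (x n) - P (y n)‖) atTop (𝓝 0) →
        Tendsto (fun n => (x n - y n) - (P (x n) - P (y n))) atTop (𝓝 0) := by
  haveI : Nonempty C := hC.to_subtype
  -- variational inequality
  have hvar : ∀ x : H, ∀ w ∈ C, ⟪x - P x, w - P x⟫ ≤ 0 := by
    intro x
    have hmem := (hP x).1
    have hinf : ‖x - P x‖ = ⨅ w : C, ‖x - w‖ := by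
      apply le_antisymm
      · exact le_ciInf fun w => (hP x).2 w w.2
      · exact ciInf_le ⟨0, fun r ⟨w, hw⟩ => hw ▸ norm_nonneg _⟩ (⟨P x, hmem⟩ : C)
    exact (norm_eq_iInf_iff_real_inner_le_zero hCv hmem).1 hinf
  -- firm nonexpansiveness
  have hfirm : ∀ x y : H, ‖P x - P y‖ ^ 2 ≤ ⟪x - y, P x - P y⟫ := by
    intro x y
    have h1 := hvar x (P y) (hP y).1
    have h2 := hvar y (P x) (hP x).1
    have key : ⟪x - y - (P x - P y), P x - P y⟫ ≥ 0 := by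
      have : x - y - (P x - P y) = (x - P x) - (y - P y) := by abel
      rw [this, inner_sub_left]
      have h1' : ⟪x - P x, P x - P y⟫ ≥ 0 := by
        have : P x - P y = -(P y - P x) := by abel
        rw [this, inner_neg_right]; linarith
      linarith
    have := inner_sub_left (𝕜 := ℝ) (x - y) (P x - P y) (P x - P y)
    rw [real_inner_self_eq_norm_sq] at this
    linarith [this ▸ key]
  have hne : ∀ x y : H, ‖P x - P y‖ ≤ ‖x - y‖ := by
    intro x y
    rcases eq_or_ne (P x) (P y) with h | h
    · simp [h]
    · have h1 := hfirm x y
      have h2 : ⟪x - y, P x - P y⟫ ≤ ‖x - y‖ * ‖P x - P y‖ := real_inner_le_norm _ _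
      have h3 : 0 < ‖P x - P y‖ := norm_pos_iff.2 (sub_ne_zero.2 h)
      nlinarith
  refine ⟨hne, ?_⟩
  rintro x y ⟨M, hM⟩ htend
  have hsq : ∀ n, ‖(x n - y n) - (P (x n) - P (y n))‖ ^ 2 ≤
      2 * M * (‖x n - y n‖ - ‖P (x n) - P (y n)‖) := by
    intro n
    have key := hfirm (x n) (y n)
    have expand : ‖(x n - y n) - (P (x n) - P (y n))‖ ^ 2 =
        ‖x n - y n‖ ^ 2 - 2 * ⟪x n - y n, P (x n) - P (y n)⟫ + ‖P (x n) - P (y n)‖ ^ 2 := by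
      rw [← real_inner_self_eq_norm_sq, ← real_inner_self_eq_norm_sq,
        ← real_inner_self_eq_norm_sq, inner_sub_sub_self,
        real_inner_comm (P (x n) - P (y n)) (x n - y n)]
      ring
    have h1 : ‖(x n - y n) - (P (x n) - P (y n))‖ ^ 2 ≤
        ‖x n - y n‖ ^ 2 - ‖P (x n) - P (y n)‖ ^ 2 := by
      rw [expand]; linarith
    have h2 : ‖P (x n) - P (y n)‖ ≤ ‖x n - y n‖ := hne _ _
    have h3 : ‖x n - y n‖ ≤ M := hM n
    nlinarith [norm_nonneg (P (x n) - P (y n)), norm_nonneg (x n - y n)]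
  have hsq0 : Tendsto (fun n => ‖(x n - y n) - (P (x n) - P (y n))‖ ^ 2) atTop (𝓝 0) := by
    have hub : Tendsto (fun n => 2 * M * (‖x n - y n‖ - ‖P (x n) - P (y n)‖)) atTop (𝓝 0) := by
      have := htend.const_mul (2 * M)
      simpa using this
    exact squeeze_zero (fun n => sq_nonneg _) hsq hub
  rw [tendsto_zero_iff_norm_tendsto_zero]
  have h := (Real.continuous_sqrt.tendsto 0).comp hsq0
  rw [Real.sqrt_zero] at h
  exact h.congr fun n => Real.sqrt_sq (norm_nonneg _)
end

section
/- Every firmly nonexpansive mapping T : H → H on a real Hilbert space is strongly nonexpansive: if (x_n), (y_n) are sequences with (x_n - y_n) bounded and |x_n - y_n| - |Tx_n - Ty_n| → 0, then (x_n - y_n) - (Tx_n - Ty_n) → 0 in norm. -/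
/-!
Write `u = x - y` and `v = Tx - Ty`, so firm nonexpansiveness reads `‖v‖² ≤ ⟪u, v⟫`. Then
`‖u - v‖² = ‖u‖² - 2⟪u, v⟫ + ‖v‖² ≤ ‖u‖² - ‖v‖² ≤ 2‖u‖ (‖u‖ - ‖v‖)`,
so a bound on `‖u‖` turns `‖u‖ - ‖v‖ → 0` into `u - v → 0`.
-/

open Filter Topology

section FirmInequality

variable {E : Type*} [NormedAddCommGroup E] [InnerProductSpace ℝ E] {u v : E}

theorem norm_le_of_sq_norm_le_inner (h : ‖v‖ ^ 2 ≤ inner ℝ u v) : ‖v‖ ≤ ‖u‖ := by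
  have hcs : inner ℝ u v ≤ ‖u‖ * ‖v‖ := real_inner_le_norm u v
  nlinarith [norm_nonneg u, norm_nonneg v]

theorem sq_norm_sub_le_of_sq_norm_le_inner (h : ‖v‖ ^ 2 ≤ inner ℝ u v) :
    ‖u - v‖ ^ 2 ≤ 2 * ‖u‖ * (‖u‖ - ‖v‖) := by
  have hvu := norm_le_of_sq_norm_le_inner h
  calc ‖u - v‖ ^ 2 = ‖u‖ ^ 2 - 2 * inner ℝ u v + ‖v‖ ^ 2 := norm_sub_sq_real u v
    _ ≤ (‖u‖ + ‖v‖) * (‖u‖ - ‖v‖) := by linarith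
    _ ≤ 2 * ‖u‖ * (‖u‖ - ‖v‖) := by nlinarith

theorem tendsto_sub_nhds_zero_of_sq_norm_le_inner {ι : Type*} {l : Filter ι} {u v : ι → E}
    (h : ∀ i, ‖v i‖ ^ 2 ≤ inner ℝ (u i) (v i)) {M : ℝ} (hM : ∀ i, ‖u i‖ ≤ M)
    (hlim : Tendsto (fun i => ‖u i‖ - ‖v i‖) l (𝓝 0)) :
    Tendsto (fun i => u i - v i) l (𝓝 0) := by
  have hsq : Tendsto (fun i => ‖u i - v i‖ ^ 2) l (𝓝 0) := by
    refine squeeze_zero (fun i => sq_nonneg _) (fun i => ?_) (by simpa using hlim.const_mul (2 * M))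
    have hvu := norm_le_of_sq_norm_le_inner (h i)
    nlinarith [sq_norm_sub_le_of_sq_norm_le_inner (h i), hM i]
  rw [tendsto_zero_iff_norm_tendsto_zero]
  simpa [Real.sqrt_sq (norm_nonneg _)] using hsq.sqrt

end FirmInequality

theorem stmt3_general {H : Type*} [NormedAddCommGroup H] [InnerProductSpace ℝ H]
    (T : H → H) (hT : ∀ x y : H, ‖T x - T y‖ ^ 2 ≤ inner ℝ (x - y) (T x - T y : H)) :
    (∀ x y : H, ‖T x - T y‖ ≤ ‖x - y‖) ∧
      ∀ x y : ℕ → H, (∃ M : ℝ, ∀ n, ‖x n - y n‖ ≤ M) →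
        Tendsto (fun n => ‖x n - y n‖ - ‖T (x n) - T (y n)‖) atTop (𝓝 0) →
        Tendsto (fun n => (x n - y n) - (T (x n) - T (y n))) atTop (𝓝 0) :=
  ⟨fun x y => norm_le_of_sq_norm_le_inner (hT x y), fun _ _ ⟨_, hM⟩ hlim =>
    tendsto_sub_nhds_zero_of_sq_norm_le_inner (fun _ => hT _ _) hM hlim⟩

theorem stmt3 {H : Type*} [NormedAddCommGroup H] [InnerProductSpace ℝ H] [CompleteSpace H]
    (T : H → H) (hT : ∀ x y : H, ‖T x - T y‖ ^ 2 ≤ inner ℝ (x - y) (T x - T y : H)) :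
    (∀ x y : H, ‖T x - T y‖ ≤ ‖x - y‖) ∧
      ∀ x y : ℕ → H, (∃ M : ℝ, ∀ n, ‖x n - y n‖ ≤ M) →
        Tendsto (fun n => ‖x n - y n‖ - ‖T (x n) - T (y n)‖) atTop (𝓝 0) →
        Tendsto (fun n => (x n - y n) - (T (x n) - T (y n))) atTop (𝓝 0) :=
  stmt3_general T hT
end

section
/- Let C₁ and C₂ be nonempty closed convex subsets of a real Hilbert space H with nearest point projections P₁, P₂, and let d(C₁,C₂) = inf{|x - y| : x ∈ C₁, y ∈ C₂}. Then a point b ∈ H is a fixed point of P₂ ∘ P₁ if and only if b ∈ C₂ and |b - P₁ b| = d(C₁, C₂). -/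
open Filter Topology RealInnerProductSpace

/-- Variational characterization: if `v ∈ C` minimizes `‖x - ·‖` over convex `C`, then
`⟪x - v, y - v⟫ ≤ 0` for all `y ∈ C`. -/
lemma min_inner_le_zero {H : Type*} [NormedAddCommGroup H] [InnerProductSpace ℝ H]
    {C : Set H} (hv : Convex ℝ C) {x v : H} (hvC : v ∈ C)
    (hmin : ∀ y ∈ C, ‖x - v‖ ≤ ‖x - y‖) :
    ∀ y ∈ C, ⟪x - v, y - v⟫ ≤ 0 := by
  haveI : Nonempty C := ⟨⟨v, hvC⟩⟩
  have key : ‖x - v‖ = ⨅ w : C, ‖x - w‖ := by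
    refine le_antisymm (le_ciInf fun w => hmin w w.2) ?_
    have hb : BddBelow (Set.range fun w : C => ‖x - w‖) := by
      refine ⟨0, ?_⟩
      rintro r ⟨w, rfl⟩
      positivity
    exact ciInf_le hb ⟨v, hvC⟩
  exact (norm_eq_iInf_iff_real_inner_le_zero hv hvC).mp key

theorem stmt4 {H : Type*} [NormedAddCommGroup H] [InnerProductSpace ℝ H] [CompleteSpace H]
    (C₁ C₂ : Set H) (h₁ : C₁.Nonempty) (h₁c : IsClosed C₁) (h₁v : Convex ℝ C₁)
    (h₂ : C₂.Nonempty) (h₂c : IsClosed C₂) (h₂v : Convex ℝ C₂)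
    (P₁ P₂ : H → H) (hP₁ : IsNearestPointProj C₁ P₁) (hP₂ : IsNearestPointProj C₂ P₂)
    (b : H) :
    P₂ (P₁ b) = b ↔ b ∈ C₂ ∧ ‖b - P₁ b‖ = setDist C₁ C₂ := by
  set a := P₁ b with ha
  have haC : a ∈ C₁ := (hP₁ b).1
  have hbdd : BddBelow {d : ℝ | ∃ x ∈ C₁, ∃ y ∈ C₂, d = ‖x - y‖} := by
    refine ⟨0, ?_⟩
    rintro r ⟨x, _, y, _, rfl⟩
    positivity
  constructor
  · intro hfix
    have hbC : b ∈ C₂ := by rw [← hfix]; exact (hP₂ a).1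
    refine ⟨hbC, le_antisymm ?_ ?_⟩
    · -- ‖b - a‖ ≤ every ‖x - y‖ with x ∈ C₁, y ∈ C₂, so ≤ sInf
      refine le_csInf ⟨‖a - b‖, a, haC, b, hbC, rfl⟩ ?_
      rintro r ⟨x, hx, y, hy, rfl⟩
      have h1 : ⟪b - a, x - a⟫ ≤ 0 := min_inner_le_zero h₁v haC (hP₁ b).2 x hx
      have h2 : ⟪a - b, y - b⟫ ≤ 0 := by
        refine min_inner_le_zero h₂v (x := a) (v := b) hbC ?_ y hy
        intro z hz
        have := (hP₂ a).2 z hz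
        rwa [hfix] at this
      have h2' : ⟪b - a, y - b⟫ = -⟪a - b, y - b⟫ := by
        rw [show b - a = -(a - b) by abel, inner_neg_left]
      have expand : ⟪b - a, y - x⟫ = ‖b - a‖ ^ 2 - ⟪b - a, x - a⟫ + ⟪b - a, y - b⟫ := by
        rw [show y - x = (b - a) + -(x - a) + (y - b) by abel, inner_add_right,
          inner_add_right, inner_neg_right, real_inner_self_eq_norm_sq]
        ring
      have key : ‖b - a‖ ^ 2 ≤ ⟪b - a, y - x⟫ := by
        rw [expand]; linarith
      have cs : ⟪b - a, y - x⟫ ≤ ‖b - a‖ * ‖y - x‖ := real_inner_le_norm _ _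
      have hba : ‖b - a‖ ^ 2 ≤ ‖b - a‖ * ‖y - x‖ := le_trans key cs
      rcases eq_or_lt_of_le (norm_nonneg (b - a)) with h0 | h0
      · rw [← h0]; exact norm_nonneg _
      · have hle : ‖b - a‖ ≤ ‖y - x‖ := by nlinarith
        rw [norm_sub_rev y x] at hle
        exact hle
    · -- sInf ≤ ‖b - a‖ since it's in the set
      have h := csInf_le hbdd ⟨a, haC, b, hbC, rfl⟩
      rw [norm_sub_rev b a]
      exact h
  · rintro ⟨hbC, hd⟩
    have hd' : ‖a - b‖ = setDist C₁ C₂ := by rw [norm_sub_rev a b]; exact hd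
    -- b minimizes ‖a - ·‖ over C₂
    have hmin : ∀ y ∈ C₂, ‖a - b‖ ≤ ‖a - y‖ := by
      intro y hy
      have h2 : setDist C₁ C₂ ≤ ‖a - P₂ a‖ :=
        csInf_le hbdd ⟨a, haC, P₂ a, (hP₂ a).1, rfl⟩
      calc ‖a - b‖ = setDist C₁ C₂ := hd'
        _ ≤ ‖a - P₂ a‖ := h2
        _ ≤ ‖a - y‖ := (hP₂ a).2 y hy
    -- both b and P₂ a are minimizers; uniqueness via inner characterization
    have hb' := min_inner_le_zero h₂v hbC hmin (P₂ a) (hP₂ a).1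
    have hc' := min_inner_le_zero h₂v (hP₂ a).1 (hP₂ a).2 b hbC
    have h2' : ⟪a - P₂ a, P₂ a - b⟫ = -⟪a - P₂ a, b - P₂ a⟫ := by
      rw [show (P₂ a : H) - b = -(b - P₂ a) by abel, inner_neg_right]
    have e : ⟪a - b, P₂ a - b⟫ - ⟪a - P₂ a, P₂ a - b⟫ = ‖P₂ a - b‖ ^ 2 := by
      rw [← inner_sub_left, show a - b - (a - P₂ a) = P₂ a - b by abel,
        real_inner_self_eq_norm_sq]
    have hsq : ‖P₂ a - b‖ ^ 2 ≤ 0 := by rw [← e, h2']; linarith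
    have hz : ‖P₂ a - b‖ = 0 := by nlinarith [norm_nonneg (P₂ a - b)]
    exact sub_eq_zero.mp (norm_eq_zero.mp hz)
end

section
/- Let C₁, C₂ be nonempty closed convex subsets of a real Hilbert space H with projections P₁, P₂, let x₀ ∈ H, and define x_{2n+1} = P₁ x_{2n}, x_{2n+2} = P₂ x_{2n+1}. Then lim_{n→∞} |x_{2n+2} - x_{2n+1}| = lim_{n→∞} |x_{2n+1} - x_{2n}| = d(C₁, C₂), where d(C₁,C₂) = inf{|x - y| : x ∈ C₁, y ∈ C₂}. -/
/-!
Projections onto closed convex sets are firmly nonexpansive, so for two orbits `x`, `y` of the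
alternating projections the squared distances `‖x n - y n‖²` decrease by at least the square of
the difference of their displacements `(x n - x (n+1)) - (y n - y (n+1))`; these squares are
therefore summable and the displacements of `x` and `y` become asymptotically equal. Starting `y`
at a point `b ∈ C₂` whose distance to some `a ∈ C₁` nearly realises `d(C₁, C₂)`, the displacement
norms of `y` never exceed `‖a - b‖`, while every displacement of `x` after the first joins a
point of `C₁` with one of `C₂` and so has norm at least `d(C₁, C₂)`.
-/

open Filter Topology

open scoped InnerProductSpace

def IsFirmlyNonexpansive {E : Type*} [SeminormedAddCommGroup E] (T : E → E) : Prop :=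
  ∀ u v, ‖T u - T v‖ ^ 2 + ‖(u - T u) - (v - T v)‖ ^ 2 ≤ ‖u - v‖ ^ 2

theorem tendsto_norm_sub_sub_of_isFirmlyNonexpansive {E : Type*} [SeminormedAddCommGroup E]
    {T : ℕ → E → E} (hT : ∀ n, IsFirmlyNonexpansive (T n)) {x y : ℕ → E}
    (hx : ∀ n, x (n + 1) = T n (x n)) (hy : ∀ n, y (n + 1) = T n (y n)) :
    Tendsto (fun n => ‖(x n - x (n + 1)) - (y n - y (n + 1))‖) atTop (𝓝 0) := by
  have hstep : ∀ n, ‖x (n + 1) - y (n + 1)‖ ^ 2 + ‖(x n - x (n + 1)) - (y n - y (n + 1))‖ ^ 2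
      ≤ ‖x n - y n‖ ^ 2 := fun n => by
    rw [hx, hy]; exact hT n (x n) (y n)
  set e : ℕ → ℝ := fun n => ‖(x n - x (n + 1)) - (y n - y (n + 1))‖
  have hsum : ∀ n, ∑ k ∈ Finset.range n, e k ^ 2 ≤ ‖x 0 - y 0‖ ^ 2 - ‖x n - y n‖ ^ 2 := by
    intro n
    induction n with
    | zero => simp
    | succ n ih => rw [Finset.sum_range_succ]; linarith [hstep n]
  have hsummable : Summable (fun n => e n ^ 2) :=
    summable_of_sum_range_le (fun n => by positivity)
      (fun n => (hsum n).trans (sub_le_self _ (by positivity)))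
  simpa [e] using hsummable.tendsto_atTop_zero.sqrt

section Projection

variable {H : Type*} [NormedAddCommGroup H] [InnerProductSpace ℝ H] {C : Set H} {P : H → H}

theorem IsNearestPointProj.real_inner_sub_le_zero (hP : IsNearestPointProj C P)
    (hC : Convex ℝ C) (x : H) {y : H} (hy : y ∈ C) : ⟪x - P x, y - P x⟫_ℝ ≤ 0 := by
  have : Nonempty C := ⟨⟨P x, (hP x).1⟩⟩
  refine (norm_eq_iInf_iff_real_inner_le_zero hC (hP x).1).1 ?_ y hy
  refine le_antisymm (le_ciInf fun w => (hP x).2 w w.2) (ciInf_le ?_ (⟨P x, (hP x).1⟩ : C))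
  exact ⟨0, by rintro _ ⟨w, rfl⟩; positivity⟩

theorem IsNearestPointProj.isFirmlyNonexpansive (hP : IsNearestPointProj C P)
    (hC : Convex ℝ C) : IsFirmlyNonexpansive P := by
  intro x y
  have hx := hP.real_inner_sub_le_zero hC x (hP y).1
  have hy := hP.real_inner_sub_le_zero hC y (hP x).1
  have hcross : ⟪P x - P y, (x - P x) - (y - P y)⟫_ℝ
      = -⟪x - P x, P y - P x⟫_ℝ - ⟪y - P y, P x - P y⟫_ℝ := by
    simp only [inner_sub_left, inner_sub_right, real_inner_comm]
    ring
  calc ‖P x - P y‖ ^ 2 + ‖(x - P x) - (y - P y)‖ ^ 2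
      ≤ ‖(P x - P y) + ((x - P x) - (y - P y))‖ ^ 2 := by
        rw [norm_add_sq_real]; linarith
    _ = ‖x - y‖ ^ 2 := by congr 2; abel

end Projection

section SetDist

variable {H : Type*} [NormedAddCommGroup H] {C₁ C₂ : Set H} {a b : H}

theorem setDist_le_norm_sub (ha : a ∈ C₁) (hb : b ∈ C₂) : setDist C₁ C₂ ≤ ‖a - b‖ :=
  csInf_le ⟨0, by rintro _ ⟨a, -, b, -, rfl⟩; positivity⟩ ⟨a, ha, b, hb, rfl⟩

theorem setDist_comm (C₁ C₂ : Set H) : setDist C₁ C₂ = setDist C₂ C₁ := by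
  unfold setDist
  congr 1
  ext d
  constructor <;> rintro ⟨a, ha, b, hb, rfl⟩ <;> exact ⟨b, hb, a, ha, norm_sub_rev _ _⟩

theorem exists_norm_sub_lt_of_setDist_lt (h₁ : C₁.Nonempty) (h₂ : C₂.Nonempty) {c : ℝ}
    (hc : setDist C₁ C₂ < c) : ∃ a ∈ C₁, ∃ b ∈ C₂, ‖a - b‖ < c := by
  obtain ⟨a, ha⟩ := h₁
  obtain ⟨b, hb⟩ := h₂
  unfold setDist at hc
  obtain ⟨_, ⟨a, ha, b, hb, rfl⟩, hlt⟩ :=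
    exists_lt_of_csInf_lt (by exact ⟨_, a, ha, b, hb, rfl⟩) hc
  exact ⟨a, ha, b, hb, hlt⟩

theorem setDist_succ_of_periodic {K : ℕ → Set H} (hK : Function.Periodic K 2) (n : ℕ) :
    setDist (K n) (K (n + 1)) = setDist (K 0) (K 1) := by
  induction n with
  | zero => rfl
  | succ n ih => rw [hK n, setDist_comm, ih]

end SetDist

section AlternatingProjections

variable {H : Type*} [NormedAddCommGroup H] [InnerProductSpace ℝ H]
  {K : ℕ → Set H} {Q : ℕ → H → H} {x : ℕ → H}

theorem mem_of_isNearestPointProj_orbit (hQ : ∀ n, IsNearestPointProj (K n) (Q n))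
    (hx : ∀ n, x (n + 1) = Q n (x n)) (n : ℕ) : x (n + 1) ∈ K n :=
  hx n ▸ (hQ n (x n)).1

theorem setDist_le_norm_sub_succ (hK : Function.Periodic K 2)
    (hQ : ∀ n, IsNearestPointProj (K n) (Q n)) (hx : ∀ n, x (n + 1) = Q n (x n)) (n : ℕ) :
    setDist (K 0) (K 1) ≤ ‖x (n + 1) - x (n + 1 + 1)‖ :=
  setDist_succ_of_periodic hK n ▸ setDist_le_norm_sub
    (mem_of_isNearestPointProj_orbit hQ hx n) (mem_of_isNearestPointProj_orbit hQ hx (n + 1))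

theorem antitone_norm_sub_succ (hK : Function.Periodic K 2)
    (hQ : ∀ n, IsNearestPointProj (K n) (Q n)) (hx : ∀ n, x (n + 1) = Q n (x n))
    (hx₀ : x 0 ∈ K 1) : Antitone fun n => ‖x n - x (n + 1)‖ := by
  have hmem : ∀ n, x n ∈ K (n + 1)
    | 0 => hx₀
    | n + 1 => hK n ▸ mem_of_isNearestPointProj_orbit hQ hx n
  refine antitone_nat_of_succ_le fun n => ?_
  calc ‖x (n + 1) - x (n + 1 + 1)‖ ≤ ‖x (n + 1) - x n‖ := by
        rw [hx (n + 1)]; exact (hQ (n + 1) _).2 _ (hmem n)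
    _ = ‖x n - x (n + 1)‖ := norm_sub_rev _ _

theorem tendsto_norm_sub_succ_setDist (hK : Function.Periodic K 2) (hKc : ∀ n, Convex ℝ (K n))
    (hQ : ∀ n, IsNearestPointProj (K n) (Q n)) (hx : ∀ n, x (n + 1) = Q n (x n)) :
    Tendsto (fun n => ‖x n - x (n + 1)‖) atTop (𝓝 (setDist (K 0) (K 1))) := by
  refine tendsto_order.2 ⟨fun c hc => ?_, fun c hc => ?_⟩
  · refine (eventually_ge_atTop 1).mono fun n hn => ?_
    obtain ⟨k, rfl⟩ := Nat.exists_eq_add_of_le' hn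
    exact hc.trans_le (setDist_le_norm_sub_succ hK hQ hx k)
  obtain ⟨a, ha, b, hb, hab⟩ :=
    exists_norm_sub_lt_of_setDist_lt ⟨_, (hQ 0 (x 0)).1⟩ ⟨_, (hQ 1 (x 0)).1⟩ hc
  let y : ℕ → H := fun n => Nat.rec b (fun k yk => Q k yk) n
  have hy : ∀ n, y (n + 1) = Q n (y n) := fun _ => rfl
  have hy_le : ∀ n, ‖y n - y (n + 1)‖ ≤ ‖a - b‖ := fun n =>
    calc ‖y n - y (n + 1)‖ ≤ ‖y 0 - y 1‖ := antitone_norm_sub_succ hK hQ hy hb (Nat.zero_le n)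
      _ ≤ ‖b - a‖ := (hQ 0 b).2 a ha
      _ = ‖a - b‖ := norm_sub_rev _ _
  have hclose := tendsto_norm_sub_sub_of_isFirmlyNonexpansive
    (fun n => (hQ n).isFirmlyNonexpansive (hKc n)) hx hy
  filter_upwards [hclose.eventually (gt_mem_nhds (sub_pos.2 hab))] with n hn
  calc ‖x n - x (n + 1)‖ ≤ ‖y n - y (n + 1)‖ + ‖(x n - x (n + 1)) - (y n - y (n + 1))‖ :=
        norm_le_insert' _ _
    _ < c := by linarith [hy_le n]

end AlternatingProjections

theorem stmt6_general {H : Type*} [NormedAddCommGroup H] [InnerProductSpace ℝ H]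
    (C₁ C₂ : Set H) (h₁v : Convex ℝ C₁) (h₂v : Convex ℝ C₂)
    (P₁ P₂ : H → H) (hP₁ : IsNearestPointProj C₁ P₁) (hP₂ : IsNearestPointProj C₂ P₂)
    (x : ℕ → H)
    (hodd : ∀ n : ℕ, x (2 * n + 1) = P₁ (x (2 * n)))
    (heven : ∀ n : ℕ, x (2 * n + 2) = P₂ (x (2 * n + 1))) :
    Tendsto (fun n => ‖x (2 * n + 2) - x (2 * n + 1)‖) atTop (𝓝 (setDist C₁ C₂)) ∧
    Tendsto (fun n => ‖x (2 * n + 1) - x (2 * n)‖) atTop (𝓝 (setDist C₁ C₂)) := by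
  let K : ℕ → Set H := fun n => if Even n then C₁ else C₂
  let Q : ℕ → H → H := fun n => if Even n then P₁ else P₂
  have hK : Function.Periodic K 2 := fun n => by simp [K, Nat.even_add]
  have hKc : ∀ n, Convex ℝ (K n) := fun n => by by_cases h : Even n <;> simp [K, h, h₁v, h₂v]
  have hQ : ∀ n, IsNearestPointProj (K n) (Q n) := fun n => by
    by_cases h : Even n <;> simp [K, Q, h, hP₁, hP₂]
  have hx : ∀ n, x (n + 1) = Q n (x n) := fun n => by
    obtain ⟨k, rfl | rfl⟩ := Nat.even_or_odd' n
    · simpa [Q] using hodd k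
    · simpa [Q, Nat.even_add_one] using heven k
  have hlim : Tendsto (fun n => ‖x n - x (n + 1)‖) atTop (𝓝 (setDist C₁ C₂)) := by
    simpa [K] using tendsto_norm_sub_succ_setDist hK hKc hQ hx
  have h2n : Tendsto (fun n : ℕ => 2 * n) atTop atTop := tendsto_id.const_mul_atTop' two_pos
  exact ⟨(hlim.comp ((tendsto_add_atTop_nat 1).comp h2n)).congr fun n => norm_sub_rev _ _,
    (hlim.comp h2n).congr fun n => norm_sub_rev _ _⟩

theorem stmt6 {H : Type*} [NormedAddCommGroup H] [InnerProductSpace ℝ H] [CompleteSpace H]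
    (C₁ C₂ : Set H) (h₁ : C₁.Nonempty) (h₁c : IsClosed C₁) (h₁v : Convex ℝ C₁)
    (h₂ : C₂.Nonempty) (h₂c : IsClosed C₂) (h₂v : Convex ℝ C₂)
    (P₁ P₂ : H → H) (hP₁ : IsNearestPointProj C₁ P₁) (hP₂ : IsNearestPointProj C₂ P₂)
    (x₀ : H) (x : ℕ → H) (hx0 : x 0 = x₀)
    (hodd : ∀ n : ℕ, x (2 * n + 1) = P₁ (x (2 * n)))
    (heven : ∀ n : ℕ, x (2 * n + 2) = P₂ (x (2 * n + 1))) :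
    Tendsto (fun n => ‖x (2 * n + 2) - x (2 * n + 1)‖) atTop (𝓝 (setDist C₁ C₂)) ∧
    Tendsto (fun n => ‖x (2 * n + 1) - x (2 * n)‖) atTop (𝓝 (setDist C₁ C₂)) :=
  stmt6_general C₁ C₂ h₁v h₂v P₁ P₂ hP₁ hP₂ x hodd heven
end

section
/- Let C₁, C₂ be nonempty closed convex subsets of a real Hilbert space H with projections P₁, P₂, let x₀ ∈ H, and define the alternating projection sequence x_{2n+1} = P₁ x_{2n}, x_{2n+2} = P₂ x_{2n+1}. Then x_{2n+2} - x_{2n+1} → v and x_{2n} - x_{2n+1} → v in norm as n → ∞, where v is the unique point of least norm in the closure of the set C₂ - C₁ = {c₂ - c₁ : c₂ ∈ C₂, c₁ ∈ C₁}. -/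
open Filter Topology RealInnerProductSpace

private lemma proj_inner {H : Type*} [NormedAddCommGroup H] [InnerProductSpace ℝ H]
    {C : Set H} (hC : Convex ℝ C) {P : H → H} (hP : IsNearestPointProj C P)
    (x : H) {c : H} (hc : c ∈ C) : ⟪x - P x, c - P x⟫ ≤ 0 := by
  haveI : Nonempty C := ⟨⟨P x, (hP x).1⟩⟩
  have h1 : ‖x - P x‖ = ⨅ w : C, ‖x - w‖ := by
    refine le_antisymm (le_ciInf fun w => (hP x).2 w w.2) ?_
    have hbb : BddBelow (Set.range fun w : C => ‖x - w‖) := by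
      refine ⟨0, ?_⟩; rintro - ⟨w, rfl⟩; exact norm_nonneg _
    exact ciInf_le hbb ⟨P x, (hP x).1⟩
  exact (norm_eq_iInf_iff_real_inner_le_zero hC (hP x).1).mp h1 c hc

private lemma proj_sq {H : Type*} [NormedAddCommGroup H] [InnerProductSpace ℝ H]
    {C : Set H} (hC : Convex ℝ C) {P : H → H} (hP : IsNearestPointProj C P)
    (x : H) {c : H} (hc : c ∈ C) :
    ‖P x - c‖ ^ 2 + ‖x - P x‖ ^ 2 ≤ ‖x - c‖ ^ 2 := by
  have h := proj_inner hC hP x hc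
  have e : x - c = (x - P x) + (P x - c) := by abel
  rw [e, norm_add_sq_real]
  have h2 : ⟪x - P x, P x - c⟫ = - ⟪x - P x, c - P x⟫ := by
    rw [← inner_neg_right]
    congr 1
    abel
  linarith [h2, h]

theorem stmt7 {H : Type*} [NormedAddCommGroup H] [InnerProductSpace ℝ H] [CompleteSpace H]
    (C₁ C₂ : Set H) (h₁ : C₁.Nonempty) (h₁c : IsClosed C₁) (h₁v : Convex ℝ C₁)
    (h₂ : C₂.Nonempty) (h₂c : IsClosed C₂) (h₂v : Convex ℝ C₂)
    (P₁ P₂ : H → H) (hP₁ : IsNearestPointProj C₁ P₁) (hP₂ : IsNearestPointProj C₂ P₂)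
    (x₀ : H) (x : ℕ → H) (hx0 : x 0 = x₀)
    (hodd : ∀ n : ℕ, x (2 * n + 1) = P₁ (x (2 * n)))
    (heven : ∀ n : ℕ, x (2 * n + 2) = P₂ (x (2 * n + 1)))
    (v : H) (hv : v ∈ closure {z : H | ∃ c₂ ∈ C₂, ∃ c₁ ∈ C₁, z = c₂ - c₁})
    (hvmin : ∀ w ∈ closure {z : H | ∃ c₂ ∈ C₂, ∃ c₁ ∈ C₁, z = c₂ - c₁}, ‖v‖ ≤ ‖w‖) :
    Tendsto (fun n => x (2 * n + 2) - x (2 * n + 1)) atTop (𝓝 v) ∧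
    Tendsto (fun n => x (2 * n) - x (2 * n + 1)) atTop (𝓝 v) := by
  set S : Set H := {z : H | ∃ c₂ ∈ C₂, ∃ c₁ ∈ C₁, z = c₂ - c₁} with hS
  set z : ℕ → H := fun n => x (2 * n + 2) - x (2 * n + 1) with hzdef
  set u : ℕ → H := fun n => x (2 * n) - x (2 * n + 1) with hudef
  have hz0 : ∀ n, z n = x (2 * n + 2) - x (2 * n + 1) := fun n => by simp only [hzdef]
  have hu0 : ∀ n, u n = x (2 * n) - x (2 * n + 1) := fun n => by simp only [hudef]
  -- memberships
  have hb : ∀ n : ℕ, x (2 * n + 1) ∈ C₁ := fun n => by rw [hodd n]; exact (hP₁ _).1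
  have ha : ∀ n : ℕ, x (2 * n + 2) ∈ C₂ := fun n => by rw [heven n]; exact (hP₂ _).1
  have hzS : ∀ n, z n ∈ S := fun n => by
    rw [hz0 n]; exact ⟨_, ha n, _, hb n, rfl⟩
  have huS : ∀ n, u (n + 1) ∈ S := by
    intro n
    rw [hu0 (n + 1)]
    refine ⟨x (2 * (n + 1)), ?_, x (2 * (n + 1) + 1), hb (n + 1), rfl⟩
    rw [show 2 * (n + 1) = 2 * n + 2 from by ring]
    exact ha n
  -- convexity of S and the variational inequality for v
  have hSconv : Convex ℝ S := by
    rintro - ⟨a2, ha2, a1, ha1, rfl⟩ - ⟨b2, hb2, b1, hb1, rfl⟩ s t hs ht hst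
    exact ⟨s • a2 + t • b2, h₂v ha2 hb2 hs ht hst, s • a1 + t • b1, h₁v ha1 hb1 hs ht hst,
      by rw [smul_sub, smul_sub]; abel⟩
  have hKconv : Convex ℝ (closure S) := hSconv.closure
  have hvar : ∀ w ∈ closure S, (0 : ℝ) ≤ ⟪v, w - v⟫ := by
    haveI : Nonempty (closure S) := ⟨⟨v, hv⟩⟩
    have h1 : ‖(0 : H) - v‖ = ⨅ w : closure S, ‖(0 : H) - w‖ := by
      have hbb : BddBelow (Set.range fun w : closure S => ‖(0 : H) - w‖) := by
        refine ⟨0, ?_⟩; rintro - ⟨w, rfl⟩; exact norm_nonneg _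
      refine le_antisymm (le_ciInf fun w => ?_) (ciInf_le hbb ⟨v, hv⟩)
      simpa using hvmin w w.2
    intro w hw
    have h2 := (norm_eq_iInf_iff_real_inner_le_zero hKconv hv).mp h1 w hw
    rw [zero_sub, inner_neg_left] at h2
    linarith
  -- index shifts
  have ho : ∀ n : ℕ, x (2 * n + 3) = P₁ (x (2 * n + 2)) := by
    intro n
    have h := hodd (n + 1)
    rwa [show 2 * (n + 1) + 1 = 2 * n + 3 from by ring, show 2 * (n + 1) = 2 * n + 2 from by ring] at h
  -- monotonicity of norms
  have hm1 : ∀ n, ‖u (n + 1)‖ ≤ ‖z n‖ := by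
    intro n
    rw [hu0 (n + 1), hz0 n, show 2 * (n + 1) + 1 = 2 * n + 3 from by ring,
      show 2 * (n + 1) = 2 * n + 2 from by ring, ho n]
    exact (hP₁ _).2 _ (hb n)
  have hm2 : ∀ n, ‖z (n + 1)‖ ≤ ‖u (n + 1)‖ := by
    intro n
    rw [hu0 (n + 1), hz0 (n + 1), show 2 * (n + 1) + 2 = 2 * n + 4 from by ring,
      show 2 * (n + 1) + 1 = 2 * n + 3 from by ring,
      show 2 * (n + 1) = 2 * n + 2 from by ring]
    have he : x (2 * n + 4) = P₂ (x (2 * n + 3)) := by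
      have h := heven (n + 1)
      rwa [show 2 * (n + 1) + 2 = 2 * n + 4 from by ring,
        show 2 * (n + 1) + 1 = 2 * n + 3 from by ring] at h
    rw [norm_sub_rev, he, norm_sub_rev (x (2 * n + 2))]
    exact (hP₂ _).2 _ (ha n)
  have hanti : Antitone fun n => ‖z n‖ :=
    antitone_nat_of_succ_le fun n => (hm2 n).trans (hm1 n)
  have hlb : ∀ n, ‖v‖ ≤ ‖z n‖ := fun n => hvmin _ (subset_closure (hzS n))
  have hbdd : BddBelow (Set.range fun n => ‖z n‖) := ⟨‖v‖, by rintro - ⟨n, rfl⟩; exact hlb n⟩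
  set δ : ℝ := ⨅ n, ‖z n‖ with hδdef
  have htz : Tendsto (fun n => ‖z n‖) atTop (𝓝 δ) := tendsto_atTop_ciInf hanti hbdd
  have hδlb : ‖v‖ ≤ δ := le_ciInf hlb
  have hδle : ∀ n, δ ≤ ‖z n‖ := fun n => ciInf_le hbdd n
  have hδ0 : (0 : ℝ) ≤ δ := le_trans (norm_nonneg v) hδlb
  -- the crucial inequality δ ≤ ‖v‖
  have hδv : δ ≤ ‖v‖ := by
    by_contra hcon
    push_neg at hcon
    obtain ⟨w, hwS, hwd⟩ := Metric.mem_closure_iff.mp hv (δ - ‖v‖) (by linarith)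
    have hwn : ‖w‖ < δ := by
      have h1 : ‖w‖ - ‖v‖ ≤ ‖w - v‖ := norm_sub_norm_le w v
      have h2 : ‖w - v‖ = dist v w := by rw [dist_eq_norm, norm_sub_rev]
      linarith
    obtain ⟨c₂, hc₂, c₁, hc₁, rfl⟩ := hwS
    set B : ℕ → ℝ := fun n => ‖x (2 * n) - c₁‖ ^ 2 with hB
    have key : ∀ n : ℕ, B (n + 1) + ‖z n‖ ^ 2 + ‖u n‖ ^ 2
        ≤ B n + 2 * ⟪z n, c₂ - c₁⟫ := by
      intro n
      have ob1 : ‖x (2 * n + 1) - c₁‖ ^ 2 + ‖x (2 * n) - x (2 * n + 1)‖ ^ 2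
          ≤ ‖x (2 * n) - c₁‖ ^ 2 := by
        have h := proj_sq h₁v hP₁ (x (2 * n)) hc₁
        rwa [← hodd n] at h
      have ob2 : ‖x (2 * n + 2) - c₂‖ ^ 2 + ‖x (2 * n + 1) - x (2 * n + 2)‖ ^ 2
          ≤ ‖x (2 * n + 1) - c₂‖ ^ 2 := by
        have h := proj_sq h₂v hP₂ (x (2 * n + 1)) hc₂
        rwa [← heven n] at h
      have e1 : x (2 * n + 1) - c₂ = (x (2 * n + 1) - c₁) - (c₂ - c₁) := by abel
      have e2 : x (2 * n + 2) - c₂ = (x (2 * n + 2) - c₁) - (c₂ - c₁) := by abel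
      have ex1 : ‖x (2 * n + 1) - c₂‖ ^ 2 = ‖x (2 * n + 1) - c₁‖ ^ 2
          - 2 * ⟪x (2 * n + 1) - c₁, c₂ - c₁⟫ + ‖c₂ - c₁‖ ^ 2 := by
        rw [e1]; exact norm_sub_sq_real _ _
      have ex2 : ‖x (2 * n + 2) - c₂‖ ^ 2 = ‖x (2 * n + 2) - c₁‖ ^ 2
          - 2 * ⟪x (2 * n + 2) - c₁, c₂ - c₁⟫ + ‖c₂ - c₁‖ ^ 2 := by
        rw [e2]; exact norm_sub_sq_real _ _
      have e3 : ⟪x (2 * n + 2) - c₁, c₂ - c₁⟫ - ⟪x (2 * n + 1) - c₁, c₂ - c₁⟫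
          = ⟪z n, c₂ - c₁⟫ := by
        rw [← inner_sub_left, hz0 n]
        congr 1
        abel
      have e4 : ‖x (2 * n + 1) - x (2 * n + 2)‖ ^ 2 = ‖z n‖ ^ 2 := by
        rw [hz0 n, norm_sub_rev]
      have eB : B (n + 1) = ‖x (2 * n + 2) - c₁‖ ^ 2 := by
        simp only [hB]
        rw [show 2 * (n + 1) = 2 * n + 2 from by ring]
      have eB0 : B n = ‖x (2 * n) - c₁‖ ^ 2 := rfl
      rw [eB, eB0, hz0 n, hu0 n]
      rw [hz0 n] at e3 e4
      linarith [ob1, ob2, ex1, ex2, e3, e4]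
    have dec : ∀ n : ℕ, B (n + 2) + 2 * δ * (δ - ‖c₂ - c₁‖) ≤ B (n + 1) := by
      intro n
      have k := key (n + 1)
      have hip : ⟪z (n + 1), c₂ - c₁⟫ ≤ ‖z (n + 1)‖ * ‖c₂ - c₁‖ := real_inner_le_norm _ _
      have h1 := hδle (n + 1)
      have h2 := hm2 n
      have hw0 : (0 : ℝ) ≤ ‖c₂ - c₁‖ := norm_nonneg _
      have h3 : (0 : ℝ) ≤ (‖z (n + 1)‖ - δ) * (‖z (n + 1)‖ + δ - ‖c₂ - c₁‖) := by
        apply mul_nonneg <;> linarith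
      have h4 : (0 : ℝ) ≤ (‖u (n + 1)‖ - ‖z (n + 1)‖) * (‖u (n + 1)‖ + ‖z (n + 1)‖) := by
        apply mul_nonneg <;> linarith [norm_nonneg (u (n + 1)), norm_nonneg (z (n + 1))]
      nlinarith [k, hip, h3, h4]
    set ε : ℝ := 2 * δ * (δ - ‖c₂ - c₁‖) with hε
    have hε0 : 0 < ε := by
      have : 0 < δ := lt_of_le_of_lt (norm_nonneg _) hwn
      have : 0 < δ - ‖c₂ - c₁‖ := by linarith
      positivity
    have iter : ∀ k : ℕ, B (k + 1) + (k : ℝ) * ε ≤ B 1 := by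
      intro k
      induction k with
      | zero => simp
      | succ m ih =>
        have hd := dec m
        push_cast
        push_cast at ih
        linarith
    obtain ⟨k, hk⟩ := exists_nat_gt (B 1 / ε)
    have hk' : B 1 < (k : ℝ) * ε := by rwa [div_lt_iff₀ hε0] at hk
    have hBk := iter k
    have hB0 : 0 ≤ B (k + 1) := sq_nonneg _
    linarith
  have hδeq : δ = ‖v‖ := le_antisymm hδv hδlb
  -- convergence of z
  have hsqz : ∀ n, ‖z n - v‖ ^ 2 ≤ ‖z n‖ ^ 2 - ‖v‖ ^ 2 := by
    intro n
    have h1 := hvar (z n) (subset_closure (hzS n))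
    have h2 : ⟪v, z n - v⟫ = ⟪v, z n⟫ - ‖v‖ ^ 2 := by
      rw [inner_sub_right, real_inner_self_eq_norm_sq]
    have h3 := norm_sub_sq_real (z n) v
    have h4 : ⟪z n, v⟫ = ⟪v, z n⟫ := real_inner_comm _ _
    linarith
  have htz2 : Tendsto (fun n => ‖z n‖ ^ 2 - ‖v‖ ^ 2) atTop (𝓝 0) := by
    have h := (htz.pow 2).sub (tendsto_const_nhds (x := ‖v‖ ^ 2))
    rw [hδeq, sub_self] at h
    exact h
  have hzn : Tendsto (fun n => ‖z n - v‖ ^ 2) atTop (𝓝 0) :=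
    squeeze_zero (fun n => sq_nonneg _) hsqz htz2
  have hzn' : Tendsto (fun n => ‖z n - v‖) atTop (𝓝 0) := by
    have h := hzn.sqrt
    rw [Real.sqrt_zero] at h
    exact h.congr fun n => Real.sqrt_sq (norm_nonneg _)
  have goal1 : Tendsto z atTop (𝓝 v) := tendsto_iff_norm_sub_tendsto_zero.mpr hzn'
  -- convergence of u
  have htu : Tendsto (fun n => ‖u n‖) atTop (𝓝 δ) := by
    have hcomp : Tendsto (fun n : ℕ => ‖z (n - 1)‖) atTop (𝓝 δ) :=
      htz.comp (tendsto_sub_atTop_nat 1)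
    refine tendsto_of_tendsto_of_tendsto_of_le_of_le' htz hcomp ?_ ?_
    · filter_upwards [eventually_ge_atTop 1] with n hn
      obtain ⟨m, rfl⟩ := Nat.exists_eq_add_of_le hn
      simpa [Nat.add_comm] using hm2 m
    · filter_upwards [eventually_ge_atTop 1] with n hn
      obtain ⟨m, rfl⟩ := Nat.exists_eq_add_of_le hn
      simpa [Nat.add_comm] using hm1 m
  have hsqu : ∀ᶠ n in atTop, ‖u n - v‖ ^ 2 ≤ ‖u n‖ ^ 2 - ‖v‖ ^ 2 := by
    filter_upwards [eventually_ge_atTop 1] with n hn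
    obtain ⟨m, rfl⟩ := Nat.exists_eq_add_of_le hn
    have hmem : u (1 + m) ∈ closure S := by
      rw [Nat.add_comm]; exact subset_closure (huS m)
    have h1 := hvar (u (1 + m)) hmem
    have h2 : ⟪v, u (1 + m) - v⟫ = ⟪v, u (1 + m)⟫ - ‖v‖ ^ 2 := by
      rw [inner_sub_right, real_inner_self_eq_norm_sq]
    have h3 := norm_sub_sq_real (u (1 + m)) v
    have h4 : ⟪u (1 + m), v⟫ = ⟪v, u (1 + m)⟫ := real_inner_comm _ _
    linarith
  have htu2 : Tendsto (fun n => ‖u n‖ ^ 2 - ‖v‖ ^ 2) atTop (𝓝 0) := by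
    have h := (htu.pow 2).sub (tendsto_const_nhds (x := ‖v‖ ^ 2))
    rw [hδeq, sub_self] at h
    exact h
  have hun : Tendsto (fun n => ‖u n - v‖ ^ 2) atTop (𝓝 0) :=
    squeeze_zero' (Eventually.of_forall fun n => sq_nonneg _) hsqu htu2
  have hun' : Tendsto (fun n => ‖u n - v‖) atTop (𝓝 0) := by
    have h := hun.sqrt
    rw [Real.sqrt_zero] at h
    exact h.congr fun n => Real.sqrt_sq (norm_nonneg _)
  have goal2 : Tendsto u atTop (𝓝 v) := tendsto_iff_norm_sub_tendsto_zero.mpr hun'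
  exact ⟨goal1, goal2⟩
end

section
/- Let C₁, C₂ be nonempty closed convex subsets of a real Hilbert space H with projections P₁, P₂. Suppose there exists z ∈ C₂ with P₂(P₁ z) = z. Then for any x₀ ∈ H, the alternating sequence x_{2n+1} = P₁ x_{2n}, x_{2n+2} = P₂ x_{2n+1} satisfies: (|x_{2n} - z|) is nonincreasing, and x_{2n+1} - x_{2n+2} → P₁ z - z in norm as n → ∞. -/
open Filter Topology RealInnerProductSpace

lemma proj_var_ineq {H : Type*} [NormedAddCommGroup H] [InnerProductSpace ℝ H]
    {C : Set H} (hv : Convex ℝ C) {P : H → H} (hP : IsNearestPointProj C P)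
    (x : H) : ∀ c ∈ C, ⟪x - P x, c - P x⟫ ≤ 0 := by
  have hPx := (hP x).1
  have : ‖x - P x‖ = ⨅ w : C, ‖x - w‖ := by
    haveI : Nonempty C := ⟨⟨P x, hPx⟩⟩
    apply le_antisymm
    · exact le_ciInf fun w => (hP x).2 w w.2
    · exact ciInf_le ⟨0, fun _ ⟨_, h⟩ => h ▸ norm_nonneg _⟩ (⟨P x, hPx⟩ : C)
  exact (norm_eq_iInf_iff_real_inner_le_zero hv hPx).1 this

lemma proj_firm {H : Type*} [NormedAddCommGroup H] [InnerProductSpace ℝ H]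
    {C : Set H} (hv : Convex ℝ C) {P : H → H} (hP : IsNearestPointProj C P)
    (x y : H) :
    ‖P x - P y‖ ^ 2 + ‖(x - P x) - (y - P y)‖ ^ 2 ≤ ‖x - y‖ ^ 2 := by
  have h1 : ⟪x - P x, P y - P x⟫ ≤ 0 := proj_var_ineq hv hP x (P y) (hP y).1
  have h2 : ⟪y - P y, P x - P y⟫ ≤ 0 := proj_var_ineq hv hP y (P x) (hP x).1
  have key : ‖x - y‖ ^ 2 = ‖P x - P y‖ ^ 2 + ‖(x - P x) - (y - P y)‖ ^ 2
      + 2 * ⟪(x - P x) - (y - P y), P x - P y⟫ := by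
    have : x - y = (P x - P y) + ((x - P x) - (y - P y)) := by abel
    rw [this, norm_add_sq_real]
    rw [real_inner_comm]
    ring
  have hin : 0 ≤ ⟪(x - P x) - (y - P y), P x - P y⟫ := by
    have := inner_sub_left (𝕜 := ℝ) (x - P x) (y - P y) (P x - P y)
    rw [this]
    have e1 : ⟪x - P x, P x - P y⟫ = - ⟪x - P x, P y - P x⟫ := by
      rw [show P x - P y = -(P y - P x) by abel, inner_neg_right]
    have e2 : ⟪y - P y, P x - P y⟫ = - ⟪(y - P y), -(P x - P y)⟫ := by
      rw [inner_neg_right]; ring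
    linarith [h1, h2]
  nlinarith [key, hin]

theorem stmt9 {H : Type*} [NormedAddCommGroup H] [InnerProductSpace ℝ H] [CompleteSpace H]
    (C₁ C₂ : Set H) (h₁ : C₁.Nonempty) (h₁c : IsClosed C₁) (h₁v : Convex ℝ C₁)
    (h₂ : C₂.Nonempty) (h₂c : IsClosed C₂) (h₂v : Convex ℝ C₂)
    (P₁ P₂ : H → H) (hP₁ : IsNearestPointProj C₁ P₁) (hP₂ : IsNearestPointProj C₂ P₂)
    (z : H) (hz : z ∈ C₂) (hzfix : P₂ (P₁ z) = z)
    (x₀ : H) (x : ℕ → H) (hx0 : x 0 = x₀)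
    (hodd : ∀ n : ℕ, x (2 * n + 1) = P₁ (x (2 * n)))
    (heven : ∀ n : ℕ, x (2 * n + 2) = P₂ (x (2 * n + 1))) :
    Antitone (fun n => ‖x (2 * n) - z‖) ∧
    Tendsto (fun n => x (2 * n + 1) - x (2 * n + 2)) atTop (𝓝 (P₁ z - z)) := by
  set w := P₁ z with hw
  -- key inequality
  have key : ∀ n : ℕ, ‖x (2 * n + 2) - z‖ ^ 2
      + ‖(x (2 * n + 1) - x (2 * n + 2)) - (w - z)‖ ^ 2 ≤ ‖x (2 * n) - z‖ ^ 2 := by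
    intro n
    have f1 := proj_firm h₁v hP₁ (x (2 * n)) z
    have f2 := proj_firm h₂v hP₂ (x (2 * n + 1)) w
    rw [← hodd n] at f1
    rw [← heven n, hzfix] at f2
    have h1 : ‖x (2 * n + 1) - w‖ ^ 2 ≤ ‖x (2 * n) - z‖ ^ 2 := by
      nlinarith [sq_nonneg ‖(x (2 * n) - x (2 * n + 1)) - (z - P₁ z)‖]
    have e2 : (x (2 * n + 1) - x (2 * n + 2)) - (w - z) =
        (x (2 * n + 1) - x (2 * n + 2)) - (w - z) := rfl
    nlinarith [f2]
  have hanti2 : ∀ n : ℕ, ‖x (2 * (n + 1)) - z‖ ≤ ‖x (2 * n) - z‖ := by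
    intro n
    have e : 2 * (n + 1) = 2 * n + 2 := by ring
    rw [e]
    have := key n
    have h2 : ‖x (2 * n + 2) - z‖ ^ 2 ≤ ‖x (2 * n) - z‖ ^ 2 := by
      nlinarith [sq_nonneg ‖(x (2 * n + 1) - x (2 * n + 2)) - (w - z)‖]
    exact (pow_le_pow_iff_left₀ (norm_nonneg _) (norm_nonneg _) two_ne_zero).1 h2
  have hA : Antitone fun n => ‖x (2 * n) - z‖ := antitone_nat_of_succ_le hanti2
  refine ⟨hA, ?_⟩
  -- convergence
  set s : ℕ → ℝ := fun n => ‖x (2 * n) - z‖ ^ 2 with hs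
  have hsA : Antitone s := fun m n h => by
    exact pow_le_pow_left₀ (norm_nonneg _) (hA h) 2
  have hsbdd : BddBelow (Set.range s) := ⟨0, by rintro _ ⟨n, rfl⟩; positivity⟩
  have hconv : Tendsto s atTop (𝓝 (⨅ n, s n)) := tendsto_atTop_ciInf hsA hsbdd
  have hdiff : Tendsto (fun n => s n - s (n + 1)) atTop (𝓝 0) := by
    have := hconv.sub (hconv.comp (tendsto_add_atTop_nat 1))
    simpa using this
  have hsq : Tendsto (fun n => ‖(x (2 * n + 1) - x (2 * n + 2)) - (w - z)‖ ^ 2) atTop (𝓝 0) := by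
    refine squeeze_zero (fun n => by positivity) ?_ hdiff
    intro n
    have := key n
    have e : 2 * (n + 1) = 2 * n + 2 := by ring
    have hsn1 : s (n + 1) = ‖x (2 * n + 2) - z‖ ^ 2 := by simp only [hs]; rw [e]
    have hsn : s n = ‖x (2 * n) - z‖ ^ 2 := rfl
    rw [hsn1, hsn]
    linarith [key n]
  rw [tendsto_iff_norm_sub_tendsto_zero]
  have : Tendsto (fun n => Real.sqrt (‖(x (2 * n + 1) - x (2 * n + 2)) - (w - z)‖ ^ 2))
      atTop (𝓝 (Real.sqrt 0)) := (Real.continuous_sqrt.tendsto 0).comp hsq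
  simpa [Real.sqrt_sq (norm_nonneg _)] using this
end

section
/- Let C₁, C₂ be nonempty closed convex subsets of a real Hilbert space H with projections P₁, P₂. For every x ∈ H, the iterates of T = P₂ ∘ P₁ satisfy T^n x - T^{n+1} x → 0 in norm as n → ∞ (T is asymptotically regular at every point). -/
open Filter Topology RealInnerProductSpace

lemma nearest_inner_le_zero {H : Type*} [NormedAddCommGroup H] [InnerProductSpace ℝ H]
    {C : Set H} {P : H → H} (hv : Convex ℝ C) (hP : IsNearestPointProj C P)
    (x : H) : ∀ y ∈ C, ⟪x - P x, y - P x⟫ ≤ 0 := by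
  refine (norm_eq_iInf_iff_real_inner_le_zero hv (hP x).1).mp ?_
  haveI : Nonempty C := ⟨⟨P x, (hP x).1⟩⟩
  refine le_antisymm (le_ciInf fun w => (hP x).2 w w.2) ?_
  have hbdd : BddBelow (Set.range fun w : C => ‖x - (w : H)‖) :=
    ⟨0, by rintro r ⟨w, rfl⟩; exact norm_nonneg _⟩
  exact ciInf_le hbdd ⟨P x, (hP x).1⟩

theorem stmt11 {H : Type*} [NormedAddCommGroup H] [InnerProductSpace ℝ H] [CompleteSpace H]
    (C₁ C₂ : Set H) (h₁ : C₁.Nonempty) (h₁c : IsClosed C₁) (h₁v : Convex ℝ C₁)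
    (h₂ : C₂.Nonempty) (h₂c : IsClosed C₂) (h₂v : Convex ℝ C₂)
    (P₁ P₂ : H → H) (hP₁ : IsNearestPointProj C₁ P₁) (hP₂ : IsNearestPointProj C₂ P₂) :
    ∀ x : H, Tendsto (fun n => (P₂ ∘ P₁)^[n] x - (P₂ ∘ P₁)^[n + 1] x) atTop (𝓝 0) := by
  intro x
  set T : H → H := P₂ ∘ P₁ with hT
  -- shifted iterates
  set X : ℕ → H := fun n => T^[n + 1] x with hX
  set Y : ℕ → H := fun n => P₁ (X n) with hY
  have hXsucc : ∀ n, X (n + 1) = P₂ (Y n) := by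
    intro n
    simp only [hX, hY, Function.iterate_succ_apply' T (n + 1) x]
    rfl
  have hXC₂ : ∀ n, X n ∈ C₂ := by
    intro n
    have : X n = P₂ (P₁ (T^[n] x)) := by
      simp only [hX, Function.iterate_succ_apply' T n x]; rfl
    rw [this]; exact (hP₂ _).1
  have hYC₁ : ∀ n, Y n ∈ C₁ := fun n => (hP₁ _).1
  set a : ℕ → ℝ := fun n => ‖X n - Y n‖ with ha
  set b : ℕ → ℝ := fun n => ‖Y n - X (n + 1)‖ with hb
  -- b n ≤ a n
  have hba : ∀ n, b n ≤ a n := by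
    intro n
    have := (hP₂ (Y n)).2 (X n) (hXC₂ n)
    rw [← hXsucc n] at this
    calc b n = ‖Y n - X (n + 1)‖ := rfl
      _ ≤ ‖Y n - X n‖ := this
      _ = a n := norm_sub_rev _ _
  -- a (n+1) ≤ b n
  have hab : ∀ n, a (n + 1) ≤ b n := by
    intro n
    have := (hP₁ (X (n + 1))).2 (Y n) (hYC₁ n)
    calc a (n + 1) = ‖X (n + 1) - Y (n + 1)‖ := rfl
      _ ≤ ‖X (n + 1) - Y n‖ := this
      _ = b n := norm_sub_rev _ _
  -- key quadratic bound
  have hkey : ∀ n, ‖X n - X (n + 1)‖ ^ 2 ≤ a n ^ 2 - b n ^ 2 := by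
    intro n
    have hin : ⟪Y n - X (n + 1), X n - X (n + 1)⟫ ≤ 0 := by
      have := nearest_inner_le_zero h₂v hP₂ (Y n) (X n) (hXC₂ n)
      rwa [← hXsucc n] at this
    have hsplit : X n - X (n + 1) = (X n - Y n) + (Y n - X (n + 1)) := by abel
    have hexp : ‖X n - X (n + 1)‖ ^ 2
        = a n ^ 2 + 2 * ⟪X n - Y n, Y n - X (n + 1)⟫ + b n ^ 2 := by
      rw [hsplit, norm_add_sq_real]
    have hin' : ⟪X n - Y n, Y n - X (n + 1)⟫ ≤ - b n ^ 2 := by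
      have : ⟪Y n - X (n + 1), (X n - Y n) + (Y n - X (n + 1))⟫ ≤ 0 := by
        rw [← hsplit]
        have := hin
        rwa [real_inner_comm] at this
      rw [inner_add_right, real_inner_self_eq_norm_sq] at this
      rw [real_inner_comm]
      simp only [hb]
      nlinarith [this]
    nlinarith [hexp, hin']
  -- a is antitone and nonneg, converges to its inf L
  have haanti : Antitone a := antitone_nat_of_succ_le fun n => (hab n).trans (hba n)
  have hbdd : BddBelow (Set.range a) := ⟨0, fun _ ⟨n, h⟩ => h ▸ norm_nonneg _⟩
  set L : ℝ := ⨅ n, a n with hL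
  have haL : Tendsto a atTop (𝓝 L) := tendsto_atTop_ciInf haanti hbdd
  have haL' : Tendsto (fun n => a (n + 1)) atTop (𝓝 L) :=
    (tendsto_add_atTop_iff_nat 1).mpr haL
  have hbL : Tendsto b atTop (𝓝 L) :=
    tendsto_of_tendsto_of_tendsto_of_le_of_le haL' haL hab hba
  -- a n ^ 2 - b n ^ 2 → 0
  have hdiff : Tendsto (fun n => a n ^ 2 - b n ^ 2) atTop (𝓝 0) := by
    have : Tendsto (fun n => a n ^ 2 - b n ^ 2) atTop (𝓝 (L ^ 2 - L ^ 2)) :=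
      ((haL.pow 2).sub (hbL.pow 2))
    simpa using this
  -- norms squared → 0
  have hsq : Tendsto (fun n => ‖X n - X (n + 1)‖ ^ 2) atTop (𝓝 0) := by
    refine tendsto_of_tendsto_of_tendsto_of_le_of_le tendsto_const_nhds hdiff
      (fun n => sq_nonneg _) hkey
  have hnorm : Tendsto (fun n => ‖X n - X (n + 1)‖) atTop (𝓝 0) := by
    have := (Real.continuous_sqrt.tendsto 0).comp hsq
    simp only [Function.comp_def, Real.sqrt_zero] at this
    convert this using 2 with n
    rw [Real.sqrt_sq (norm_nonneg _)]
  have hvec : Tendsto (fun n => X n - X (n + 1)) atTop (𝓝 0) :=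
    tendsto_zero_iff_norm_tendsto_zero.mpr hnorm
  -- conclude by shifting index
  rw [← tendsto_add_atTop_iff_nat 1]
  exact hvec
end

section
/- Let S₁, S₂ be closed linear subspaces of a real Hilbert space H with orthogonal projections P₁, P₂. For any x₀ ∈ H, the alternating sequence x_{2n+1} = P₁ x_{2n}, x_{2n+2} = P₂ x_{2n+1} converges in norm to P_S x₀, where P_S is the orthogonal projection onto S = S₁ ∩ S₂. -/
/-! The even iterates are the orbit of the contraction `T = P₂ P₁`. Pythagoras gives
`‖v - T v‖² ≤ 2 (‖v‖² - ‖T v‖²)`, so the steps `Tⁿ v - Tⁿ⁺¹ v` are square-summable and tend to `0`.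
Hence `Tⁿ → 0` on the range of `T - 1` and, the `Tⁿ` being equicontinuous, on its closure. For a
contraction the orthogonal complement of that range consists of fixed points of `T`, and these are
exactly `S₁ ∩ S₂`; so `Tⁿ x → P_S x`. The odd iterates are `P₁` of the even ones, with the same
limit. -/

open Filter Topology

theorem tendsto_of_tendsto_even_of_tendsto_odd {α : Type*} {u : ℕ → α} {l : Filter α}
    (h₀ : Tendsto (fun n => u (2 * n)) atTop l) (h₁ : Tendsto (fun n => u (2 * n + 1)) atTop l) :
    Tendsto u atTop l := by
  intro s hs
  obtain ⟨N₀, hN₀⟩ := eventually_atTop.1 (h₀ hs)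
  obtain ⟨N₁, hN₁⟩ := eventually_atTop.1 (h₁ hs)
  refine eventually_atTop.2 ⟨2 * (N₀ + N₁), fun m hm => ?_⟩
  obtain ⟨k, rfl | rfl⟩ := Nat.even_or_odd' m
  · exact hN₀ k (by omega)
  · exact hN₁ k (by omega)

theorem tendsto_iterate_sub_iterate_succ_of_norm_sub_sq_le {E : Type*} [SeminormedAddCommGroup E]
    {f : E → E} {C : ℝ} (hC : 0 ≤ C) (hf : ∀ v, ‖v - f v‖ ^ 2 ≤ C * (‖v‖ ^ 2 - ‖f v‖ ^ 2))
    (v : E) : Tendsto (fun n => f^[n] v - f^[n + 1] v) atTop (𝓝 0) := by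
  have hsum : Summable fun n => ‖f^[n] v - f^[n + 1] v‖ ^ 2 := by
    refine summable_of_sum_range_le (c := C * ‖v‖ ^ 2) (fun n => by positivity) fun n => ?_
    calc ∑ k ∈ Finset.range n, ‖f^[k] v - f^[k + 1] v‖ ^ 2
        ≤ ∑ k ∈ Finset.range n, C * (‖f^[k] v‖ ^ 2 - ‖f^[k + 1] v‖ ^ 2) := by
          gcongr with k
          rw [Function.iterate_succ_apply']
          exact hf _
      _ = C * (‖v‖ ^ 2 - ‖f^[n] v‖ ^ 2) := by
          rw [← Finset.mul_sum, Finset.sum_range_sub' (fun k => ‖f^[k] v‖ ^ 2)]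
          rfl
      _ ≤ C * ‖v‖ ^ 2 := by nlinarith [sq_nonneg ‖f^[n] v‖]
  rw [tendsto_zero_iff_norm_tendsto_zero]
  simpa using hsum.tendsto_atTop_zero.sqrt

namespace ContinuousLinearMap

variable {𝕜 E : Type*} [RCLike 𝕜] [NormedAddCommGroup E] [InnerProductSpace 𝕜 E]

theorem orthogonal_range_sub_one_le {T : E →L[𝕜] E} (hT : ‖T‖ ≤ 1) {K : Submodule 𝕜 E}
    (hK : ∀ v, T v = v → v ∈ K) : (LinearMap.range (T.toLinearMap - 1))ᗮ ≤ K := by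
  intro z hz
  refine hK z (eq_of_norm_le_re_inner_eq_norm_sq (𝕜 := 𝕜) ?_ ?_)
  · simpa using T.le_of_opNorm_le hT z
  · have : ∀ y, inner 𝕜 (T y) z = inner 𝕜 y z := by
      simpa [Submodule.mem_orthogonal, inner_sub_left, sub_eq_zero] using hz
    simp [this]

theorem isClosed_setOf_tendsto_iterate_zero {T : E →L[𝕜] E} (hT : ‖T‖ ≤ 1) :
    IsClosed {y | Tendsto (fun n => T^[n] y) atTop (𝓝 0)} := by
  have hlip : ∀ n, LipschitzWith 1 (⇑T)^[n] := fun n => by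
    simpa using (T.lipschitz.weaken (show ‖T‖₊ ≤ 1 from hT)).iterate n
  exact (LipschitzWith.uniformEquicontinuous _ 1 hlip).equicontinuous.isClosed_setOfPred_tendsto
    continuous_const

theorem tendsto_iterate_starProjection [CompleteSpace E] {T : E →L[𝕜] E} (hT : ‖T‖ ≤ 1)
    (hreg : ∀ v, Tendsto (fun n => T^[n] v - T^[n + 1] v) atTop (𝓝 0))
    (K : Submodule 𝕜 E) [K.HasOrthogonalProjection] (hK : ∀ v, T v = v ↔ v ∈ K) (x : E) :
    Tendsto (fun n => T^[n] x) atTop (𝓝 (K.starProjection x)) := by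
  have hfix : ∀ n, T^[n] (K.starProjection x) = K.starProjection x := fun n =>
    Function.iterate_fixed ((hK _).2 (K.starProjection_apply_mem x)) n
  suffices h : Tendsto (fun n => T^[n] (x - K.starProjection x)) atTop (𝓝 0) by
    simpa [iterate_map_sub, hfix] using h.add_const (K.starProjection x)
  have hrange : (LinearMap.range (T.toLinearMap - 1) : Set E) ⊆
      {y | Tendsto (fun n => T^[n] y) atTop (𝓝 0)} := by
    rintro _ ⟨v, rfl⟩
    simpa [iterate_map_sub, ← Function.iterate_succ_apply' T] using (hreg v).neg
  have hdense :
      x - K.starProjection x ∈ closure (LinearMap.range (T.toLinearMap - 1) : Set E) := by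
    rw [← Submodule.topologicalClosure_coe, ← Submodule.orthogonal_orthogonal_eq_closure]
    exact Submodule.orthogonal_le (orthogonal_range_sub_one_le hT fun v => (hK v).1)
      (K.sub_starProjection_mem_orthogonal x)
  exact closure_minimal hrange (isClosed_setOf_tendsto_iterate_zero hT) hdense

end ContinuousLinearMap

namespace Submodule

variable {𝕜 E : Type*} [RCLike 𝕜] [NormedAddCommGroup E] [InnerProductSpace 𝕜 E]

theorem norm_sq_eq_norm_starProjection_sq_add (K : Submodule 𝕜 E) [K.HasOrthogonalProjection]
    (v : E) : ‖v‖ ^ 2 = ‖K.starProjection v‖ ^ 2 + ‖v - K.starProjection v‖ ^ 2 := by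
  simpa using norm_sq_eq_add_norm_sq_starProjection v K

variable (K₁ K₂ : Submodule 𝕜 E) [K₁.HasOrthogonalProjection] [K₂.HasOrthogonalProjection]

theorem norm_sq_eq_norm_starProjection_comp_starProjection_sq_add (v : E) :
    ‖v‖ ^ 2 = ‖(K₂.starProjection ∘L K₁.starProjection) v‖ ^ 2 +
      (‖v - K₁.starProjection v‖ ^ 2 +
        ‖K₁.starProjection v - (K₂.starProjection ∘L K₁.starProjection) v‖ ^ 2) := by
  rw [K₁.norm_sq_eq_norm_starProjection_sq_add v,
    K₂.norm_sq_eq_norm_starProjection_sq_add (K₁.starProjection v)]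
  simp only [ContinuousLinearMap.comp_apply]
  ring

theorem norm_sub_starProjection_comp_starProjection_sq_le (v : E) :
    ‖v - (K₂.starProjection ∘L K₁.starProjection) v‖ ^ 2 ≤
      2 * (‖v‖ ^ 2 - ‖(K₂.starProjection ∘L K₁.starProjection) v‖ ^ 2) := by
  set w := (K₂.starProjection ∘L K₁.starProjection) v
  have htri : ‖v - w‖ ≤ ‖v - K₁.starProjection v‖ + ‖K₁.starProjection v - w‖ :=
    norm_sub_le_norm_sub_add_norm_sub _ _ _
  nlinarith [norm_sq_eq_norm_starProjection_comp_starProjection_sq_add K₁ K₂ v,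
    norm_nonneg (v - w), sq_nonneg (‖v - K₁.starProjection v‖ - ‖K₁.starProjection v - w‖)]

theorem norm_starProjection_comp_starProjection_le :
    ‖K₂.starProjection ∘L K₁.starProjection‖ ≤ 1 :=
  (ContinuousLinearMap.opNorm_comp_le _ _).trans <|
    mul_le_one₀ K₂.starProjection_norm_le (norm_nonneg _) K₁.starProjection_norm_le

theorem starProjection_comp_starProjection_apply_eq_self_iff {v : E} :
    (K₂.starProjection ∘L K₁.starProjection) v = v ↔ v ∈ K₁ ⊓ K₂ := by
  refine ⟨fun h => ?_, fun ⟨h₁, h₂⟩ => ?_⟩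
  · have hnorm := norm_sq_eq_norm_starProjection_comp_starProjection_sq_add K₁ K₂ v
    rw [h] at hnorm
    have h₁ : K₁.starProjection v = v := by
      rw [eq_comm, ← sub_eq_zero, ← norm_eq_zero]
      nlinarith [norm_nonneg (v - K₁.starProjection v), sq_nonneg ‖K₁.starProjection v - v‖]
    rw [ContinuousLinearMap.comp_apply, h₁] at h
    exact ⟨starProjection_eq_self_iff.1 h₁, starProjection_eq_self_iff.1 h⟩
  · simp [starProjection_eq_self_iff.2 h₁, starProjection_eq_self_iff.2 h₂]

end Submodule

theorem IsNearestPointProj.eq_starProjection {H : Type*} [NormedAddCommGroup H]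
    [InnerProductSpace ℝ H] {K : Submodule ℝ H} [K.HasOrthogonalProjection] {P : H → H}
    (hP : IsNearestPointProj (K : Set H) P) : P = K.starProjection := by
  funext u
  have hmin : ‖u - P u‖ = ⨅ w : K, ‖u - w‖ :=
    le_antisymm (le_ciInf fun w => (hP u).2 w w.2)
      (ciInf_le ⟨0, by rintro r ⟨w, rfl⟩; positivity⟩ (⟨P u, (hP u).1⟩ : K))
  exact (K.eq_starProjection_of_mem_of_inner_eq_zero (hP u).1
    ((K.norm_eq_iInf_iff_real_inner_eq_zero (hP u).1).1 hmin)).symm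

theorem stmt12 {H : Type*} [NormedAddCommGroup H] [InnerProductSpace ℝ H] [CompleteSpace H]
    (S₁ S₂ : Submodule ℝ H) (h₁c : IsClosed (S₁ : Set H)) (h₂c : IsClosed (S₂ : Set H))
    (P₁ P₂ PS : H → H)
    (hP₁ : IsNearestPointProj (S₁ : Set H) P₁) (hP₂ : IsNearestPointProj (S₂ : Set H) P₂)
    (hPS : IsNearestPointProj ((S₁ ⊓ S₂ : Submodule ℝ H) : Set H) PS)
    (x₀ : H) (x : ℕ → H) (hx0 : x 0 = x₀)
    (hodd : ∀ n : ℕ, x (2 * n + 1) = P₁ (x (2 * n)))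
    (heven : ∀ n : ℕ, x (2 * n + 2) = P₂ (x (2 * n + 1))) :
    Tendsto x atTop (𝓝 (PS x₀)) := by
  have : CompleteSpace S₁ := h₁c.completeSpace_coe
  have : CompleteSpace S₂ := h₂c.completeSpace_coe
  have : CompleteSpace (S₁ ⊓ S₂ : Submodule ℝ H) := (h₁c.inter h₂c).completeSpace_coe
  obtain rfl := hP₁.eq_starProjection
  obtain rfl := hP₂.eq_starProjection
  obtain rfl := hPS.eq_starProjection
  set T := S₂.starProjection ∘L S₁.starProjection
  have hx_even : ∀ n, x (2 * n) = T^[n] x₀ := by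
    intro n
    induction n with
    | zero => exact hx0
    | succ n ih => rw [Function.iterate_succ_apply', ← ih, mul_add_one, heven, hodd]; rfl
  have hlim : Tendsto (fun n => T^[n] x₀) atTop (𝓝 ((S₁ ⊓ S₂).starProjection x₀)) :=
    T.tendsto_iterate_starProjection (S₁.norm_starProjection_comp_starProjection_le S₂)
      (tendsto_iterate_sub_iterate_succ_of_norm_sub_sq_le zero_le_two
        (S₁.norm_sub_starProjection_comp_starProjection_sq_le S₂))
      (S₁ ⊓ S₂) (fun _ => S₁.starProjection_comp_starProjection_apply_eq_self_iff S₂) x₀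
  refine tendsto_of_tendsto_even_of_tendsto_odd (by simpa only [hx_even] using hlim) ?_
  have hfix : S₁.starProjection ((S₁ ⊓ S₂).starProjection x₀) = (S₁ ⊓ S₂).starProjection x₀ :=
    Submodule.starProjection_eq_self_iff.2
      (Submodule.mem_inf.1 ((S₁ ⊓ S₂).starProjection_apply_mem x₀)).1
  simpa only [hodd, hx_even, hfix, Function.comp_def] using
    (S₁.starProjection.continuous.tendsto _).comp hlim
end

section
/- Let C₁, C₂ be nonempty closed convex subsets of a real Hilbert space H with projections P₁, P₂, x₀ ∈ H, and alternating sequence x_{2n+1} = P₁ x_{2n}, x_{2n+2} = P₂ x_{2n+1}. If z is a fixed point of P₂ ∘ P₁, then |x_{2n+1} - P₁ z| - |x_{2n+2} - z| → 0 as n → ∞. -/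
open Filter Topology RealInnerProductSpace

lemma nearest_inner_le {H : Type*} [NormedAddCommGroup H] [InnerProductSpace ℝ H]
    {C : Set H} {P : H → H} (hv : Convex ℝ C) (hP : IsNearestPointProj C P)
    (u : H) {w : H} (hw : w ∈ C) : ⟪u - P u, w - P u⟫ ≤ 0 := by
  obtain ⟨hmem, hmin⟩ := hP u
  have hne : Nonempty C := ⟨⟨P u, hmem⟩⟩
  have heq : ‖u - P u‖ = ⨅ w : C, ‖u - w‖ := by
    apply le_antisymm
    · exact le_ciInf fun w => hmin w w.2
    · exact ciInf_le (f := fun w : C => ‖u - (w : H)‖)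
        ⟨0, by rintro d ⟨w, rfl⟩; exact norm_nonneg _⟩ ⟨P u, hmem⟩
  exact ((norm_eq_iInf_iff_real_inner_le_zero hv hmem).mp heq) w hw

lemma nearest_nonexp {H : Type*} [NormedAddCommGroup H] [InnerProductSpace ℝ H]
    {C : Set H} {P : H → H} (hv : Convex ℝ C) (hP : IsNearestPointProj C P)
    (u v : H) : ‖P u - P v‖ ≤ ‖u - v‖ := by
  have h1 : ⟪u - P u, P v - P u⟫ ≤ 0 := nearest_inner_le hv hP u (hP v).1
  have h2 : ⟪v - P v, P u - P v⟫ ≤ 0 := nearest_inner_le hv hP v (hP u).1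
  have key : ‖P u - P v‖ ^ 2 ≤ ⟪u - v, P u - P v⟫ := by
    have e : ⟪u - v, P u - P v⟫ = ⟪P u - P v, P u - P v⟫
        - ⟪u - P u, P v - P u⟫ - ⟪v - P v, P u - P v⟫ := by
      simp only [inner_sub_left, inner_sub_right]; ring
    have e2 : ⟪P u - P v, P u - P v⟫ = ‖P u - P v‖ ^ 2 :=
      real_inner_self_eq_norm_sq (P u - P v)
    linarith
  have h3 : ⟪u - v, P u - P v⟫ ≤ ‖u - v‖ * ‖P u - P v‖ := real_inner_le_norm _ _
  rcases eq_or_lt_of_le (norm_nonneg (P u - P v)) with h | h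
  · rw [← h]; exact norm_nonneg _
  · nlinarith

theorem stmt16 {H : Type*} [NormedAddCommGroup H] [InnerProductSpace ℝ H] [CompleteSpace H]
    (C₁ C₂ : Set H) (h₁ : C₁.Nonempty) (h₁c : IsClosed C₁) (h₁v : Convex ℝ C₁)
    (h₂ : C₂.Nonempty) (h₂c : IsClosed C₂) (h₂v : Convex ℝ C₂)
    (P₁ P₂ : H → H) (hP₁ : IsNearestPointProj C₁ P₁) (hP₂ : IsNearestPointProj C₂ P₂)
    (z : H) (hz : z ∈ C₂) (hzfix : P₂ (P₁ z) = z)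
    (x₀ : H) (x : ℕ → H) (hx0 : x 0 = x₀)
    (hodd : ∀ n : ℕ, x (2 * n + 1) = P₁ (x (2 * n)))
    (heven : ∀ n : ℕ, x (2 * n + 2) = P₂ (x (2 * n + 1))) :
    Tendsto (fun n => ‖x (2 * n + 1) - P₁ z‖ - ‖x (2 * n + 2) - z‖) atTop (𝓝 0) := by
  set a : ℕ → ℝ := fun n => ‖x (2 * n + 1) - P₁ z‖ with ha
  set b : ℕ → ℝ := fun n => ‖x (2 * n + 2) - z‖ with hb
  have hba : ∀ n, b n ≤ a n := by
    intro n
    have : b n = ‖P₂ (x (2 * n + 1)) - P₂ (P₁ z)‖ := by rw [hb]; simp [heven n, hzfix]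
    rw [this]
    exact nearest_nonexp h₂v hP₂ _ _
  have hab : ∀ n, a (n + 1) ≤ b n := by
    intro n
    have h2 : 2 * (n + 1) = 2 * n + 2 := by ring
    have : a (n + 1) = ‖P₁ (x (2 * n + 2)) - P₁ z‖ := by
      rw [ha]; simp only; rw [show 2 * (n+1) + 1 = 2 * (n+1) + 1 from rfl, hodd (n+1), h2]
    rw [this]
    exact nearest_nonexp h₁v hP₁ _ _
  set g : ℕ → ℝ := fun n => if n % 2 = 0 then a (n / 2) else b (n / 2) with hg
  have hanti : Antitone g := by
    apply antitone_nat_of_succ_le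
    intro n
    rcases Nat.even_or_odd n with ⟨k, hk⟩ | ⟨k, hk⟩
    · subst hk
      have e1 : (k + k) % 2 = 0 := by omega
      have e2 : (k + k + 1) % 2 = 1 := by omega
      have e3 : (k + k) / 2 = k := by omega
      have e4 : (k + k + 1) / 2 = k := by omega
      simp [hg, e1, e2, e3, e4, hba k]
    · subst hk
      have e1 : (2 * k + 1) % 2 = 1 := by omega
      have e2 : (2 * k + 1 + 1) % 2 = 0 := by omega
      have e3 : (2 * k + 1) / 2 = k := by omega
      have e4 : (2 * k + 1 + 1) / 2 = k + 1 := by omega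
      simp [hg, e1, e2, e3, e4, hab k]
  have hbdd : BddBelow (Set.range g) := ⟨0, by
    rintro _ ⟨n, rfl⟩
    rw [hg]
    dsimp only
    split <;> positivity⟩
  have hgl : Tendsto g atTop (𝓝 (⨅ n, g n)) := tendsto_atTop_ciInf hanti hbdd
  have hta : Tendsto a atTop (𝓝 (⨅ n, g n)) := by
    have h2n : Tendsto (fun n => 2 * n) atTop atTop :=
      tendsto_atTop_atTop_of_monotone (fun m n h => by omega) (fun m => ⟨m, by omega⟩)
    have hcomp : (g ∘ fun n => 2 * n) = a := funext fun n => by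
      simp [hg, Nat.mul_div_cancel_left n (by norm_num : 0 < 2)]
    exact hcomp ▸ hgl.comp h2n
  have htb : Tendsto b atTop (𝓝 (⨅ n, g n)) := by
    have h2n : Tendsto (fun n => 2 * n + 1) atTop atTop :=
      tendsto_atTop_atTop_of_monotone (fun m n h => by omega) (fun m => ⟨m, by omega⟩)
    have hcomp : (g ∘ fun n => 2 * n + 1) = b := funext fun n => by
      have e1 : (2 * n + 1) % 2 = 1 := by omega
      have e2 : (2 * n + 1) / 2 = n := by omega
      simp [hg, e1, e2]
    exact hcomp ▸ hgl.comp h2n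
  have := hta.sub htb
  simpa using this
end
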